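/- arXiv:1702.05681 — 5 statements merged into one kernel-verified Lean document; each statement's English description precedes it below -/
import Mathlib

section
/- Let G be a connected simple graph on n vertices and let k be an integer with 3 ≤ k ≤ n-1. Then sdiam_k(G) = n-1 if and only if the number of non-cut vertices of G is at most k. -/
/-!
Every connected subgraph has a spanning tree, so `steinerDist G S ≤ |X| - 1` whenever `S ⊆ X`
and `G[X]` is connected. If some non-cut vertex `v` lies outside `S`, take `X = V - v`: this
gives `n - 2`. Conversely, a connected set `X ≠ V` always misses a non-cut vertex: the vertex
`u ∉ X` farthest from `X` is one, since a shortest path from any other vertex to `X` cannot pass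
through `u`. Hence a connected subgraph containing every non-cut vertex spans `G` and has at least
`n - 1` edges, so a `k`-set containing all non-cut vertices has Steiner distance `n - 1`.
-/

open SimpleGraph

variable {V : Type*}

/-- The set of non-cut vertices of a graph: vertices whose deletion leaves the
graph (induced on the remaining vertices) connected. -/
def noncutVerts (G : SimpleGraph V) : Set V :=
  {v | (G.induce ({v}ᶜ : Set V)).Connected}

/-- The Steiner distance of a finite vertex set `S`: the minimum number of edges
of a connected subgraph of `G` whose vertex set contains `S`. -/
noncomputable def steinerDist [Fintype V] (G : SimpleGraph V) (S : Finset V) : ℕ :=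
  sInf {m | ∃ H : G.Subgraph, H.Connected ∧ ↑S ⊆ H.verts ∧ H.edgeSet.ncard = m}

/-- The Steiner `k`-diameter of `G`: the maximum Steiner distance over all
`k`-element subsets of the vertex set. -/
noncomputable def sdiam [Fintype V] (G : SimpleGraph V) (k : ℕ) : ℕ :=
  (Finset.powersetCard k (Finset.univ : Finset V)).sup (fun S => steinerDist G S)

namespace SimpleGraph

variable {G : SimpleGraph V}

namespace Subgraph

lemma ncard_edgeSet_coe (H : G.Subgraph) : H.coe.edgeSet.ncard = H.edgeSet.ncard := by
  rw [← H.image_coe_edgeSet_coe,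
    Set.ncard_image_of_injective _ (Sym2.map.injective Subtype.val_injective)]

lemma Connected.ncard_verts_le_ncard_edgeSet_add_one [Finite V] {H : G.Subgraph}
    (hH : H.Connected) : H.verts.ncard ≤ H.edgeSet.ncard + 1 := by
  simpa [← H.ncard_edgeSet_coe] using hH.coe.card_vert_le_card_edgeSet_add_one

lemma ncard_edgeSet_add_one_of_isTree_coe [Finite V] {H : G.Subgraph} (hH : H.coe.IsTree) :
    H.edgeSet.ncard + 1 = H.verts.ncard := by
  simpa [← H.ncard_edgeSet_coe] using (isTree_iff_connected_and_card.mp hH).2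

lemma Connected.exists_le_verts_eq_isTree_coe {H : G.Subgraph} (hH : H.Connected) :
    ∃ T ≤ H, T.verts = H.verts ∧ T.coe.IsTree := by
  obtain ⟨T, hle, hT⟩ := hH.coe.exists_isTree_le
  refine ⟨H.deleteEdges (Sym2.map (↑) '' T.edgeSetᶜ), deleteEdges_le _, rfl, ?_⟩
  have hT_eq : H.coe.deleteEdges T.edgeSetᶜ = T := by
    ext v w
    simp only [SimpleGraph.deleteEdges_adj, Set.mem_compl_iff, mem_edgeSet, not_not]
    exact ⟨And.right, fun h => ⟨hle h, h⟩⟩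
  rwa [← deleteEdges_coe_eq, hT_eq]

end Subgraph

lemma Connected.exists_mem_noncutVerts_notMem [Finite V] (hG : G.Connected) {s : Set V}
    (hs : (G.induce s).Connected) (hsV : s ≠ Set.univ) : ∃ u ∉ s, u ∈ noncutVerts G := by
  classical
  let distToS : V → ℕ := fun w => sInf (G.dist w '' s)
  have distToS_le : ∀ w, ∀ h ∈ s, distToS w ≤ G.dist w h := fun w h hh =>
    Nat.sInf_le ⟨h, hh, rfl⟩
  have exists_dist_eq : ∀ w, ∃ h ∈ s, G.dist w h = distToS w := fun w =>
    Nat.sInf_mem ((Set.nonempty_coe_sort.mp hs.nonempty).image _)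
  obtain ⟨u, hu, hmax⟩ :=
    Set.exists_max_image sᶜ distToS (Set.toFinite _) (Set.nonempty_compl.mpr hsV)
  -- a shortest walk from `w` to `s` through `u` would put `w` outside `s` and farther than `u`
  have avoid : ∀ w ≠ u, ∃ h ∈ s, ∃ p : G.Walk w h, u ∉ p.support := by
    intro w hwu
    obtain ⟨h, hh, hdist⟩ := exists_dist_eq w
    obtain ⟨p, hp⟩ := (hG w h).exists_walk_length_eq_dist
    refine ⟨h, hh, p, fun hup => ?_⟩
    have hfar : distToS u + 1 ≤ distToS w := by
      have h1 : (p.takeUntil u hup).length ≠ 0 := fun h0 => hwu (Walk.eq_of_length_eq_zero h0)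
      have h2 : distToS u ≤ (p.dropUntil u hup).length := (distToS_le u h hh).trans (dist_le _)
      have := congrArg Walk.length (p.take_spec hup)
      rw [Walk.length_append] at this
      omega
    have hw : w ∉ s := fun hws => by simpa using (distToS_le w w hws).trans_lt' hfar
    exact absurd (hmax w hw) (by omega)
  refine ⟨u, hu, ?_⟩
  obtain ⟨⟨h₀, hh₀⟩⟩ := hs.nonempty
  have hsu : s ⊆ {u}ᶜ := fun x hx hxu => hu (hxu ▸ hx)
  rw [noncutVerts, Set.mem_ofPred_eq, connected_iff_exists_forall_reachable]
  refine ⟨⟨h₀, hsu hh₀⟩, fun ⟨w, hw⟩ => ?_⟩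
  obtain ⟨h, hh, p, hp⟩ := avoid w hw
  exact ((hs ⟨h₀, hh₀⟩ ⟨h, hh⟩).map (induceHomOfLE G hsu).toHom).trans
    (p.reverse.induce {u}ᶜ fun x hx hxu => hp (by simp_all)).reachable

lemma Subgraph.connected_top_iff : (⊤ : G.Subgraph).Connected ↔ G.Connected :=
  Subgraph.connected_iff'.trans Subgraph.topIso.connected_iff

lemma Subgraph.Connected.verts_eq_univ_of_noncutVerts_subset [Finite V] (hG : G.Connected)
    {H : G.Subgraph} (hH : H.Connected) (hnc : noncutVerts G ⊆ H.verts) : H.verts = Set.univ := by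
  by_contra hne
  have hind : (G.induce H.verts).Connected :=
    connected_induce_iff.mpr (hH.mono Subgraph.le_induce_top_verts rfl)
  obtain ⟨u, hu, hunc⟩ := hG.exists_mem_noncutVerts_notMem hind hne
  exact hu (hnc hunc)

end SimpleGraph

section Steiner

variable [Fintype V] {G : SimpleGraph V} {S : Finset V}

lemma steinerDist_le_ncard_edgeSet {H : G.Subgraph} (hH : H.Connected) (hS : ↑S ⊆ H.verts) :
    steinerDist G S ≤ H.edgeSet.ncard :=
  Nat.sInf_le ⟨H, hH, hS, rfl⟩

lemma steinerDist_le_ncard_verts_sub_one {H : G.Subgraph} (hH : H.Connected)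
    (hS : ↑S ⊆ H.verts) : steinerDist G S ≤ H.verts.ncard - 1 := by
  obtain ⟨T, -, hTverts, hT⟩ := hH.exists_le_verts_eq_isTree_coe
  have hTconn : T.Connected := Subgraph.connected_iff'.mpr hT.connected
  have := steinerDist_le_ncard_edgeSet hTconn (hTverts ▸ hS)
  have := Subgraph.ncard_edgeSet_add_one_of_isTree_coe hT
  rw [hTverts] at this
  omega

lemma exists_connected_ncard_edgeSet_eq_steinerDist (hG : G.Connected) (S : Finset V) :
    ∃ H : G.Subgraph, H.Connected ∧ ↑S ⊆ H.verts ∧ H.edgeSet.ncard = steinerDist G S := by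
  apply Nat.sInf_mem
    (s := {m | ∃ H : G.Subgraph, H.Connected ∧ ↑S ⊆ H.verts ∧ H.edgeSet.ncard = m})
  exact ⟨_, ⊤, Subgraph.connected_top_iff.mpr hG, Set.subset_univ _, rfl⟩

lemma steinerDist_le_card_sub_one (hG : G.Connected) (S : Finset V) :
    steinerDist G S ≤ Fintype.card V - 1 := by
  simpa using steinerDist_le_ncard_verts_sub_one (Subgraph.connected_top_iff.mpr hG) (S := S)
    (Set.subset_univ _)

lemma steinerDist_le_card_sub_two {v : V} (hv : v ∈ noncutVerts G) (hvS : v ∉ S) :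
    steinerDist G S ≤ Fintype.card V - 2 := by
  have := steinerDist_le_ncard_verts_sub_one (connected_induce_iff.mp hv) (S := S)
    (fun x hx hxv => hvS (hxv ▸ hx))
  rw [Subgraph.induce_verts, Set.ncard_compl, Set.ncard_singleton, Nat.card_eq_fintype_card] at this
  omega

lemma card_sub_one_le_steinerDist (hG : G.Connected) (hS : noncutVerts G ⊆ S) :
    Fintype.card V - 1 ≤ steinerDist G S := by
  obtain ⟨H, hH, hSH, hedges⟩ := exists_connected_ncard_edgeSet_eq_steinerDist hG S
  have := hH.ncard_verts_le_ncard_edgeSet_add_one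
  rw [hH.verts_eq_univ_of_noncutVerts_subset hG (hS.trans hSH), Set.ncard_univ,
    Nat.card_eq_fintype_card] at this
  omega

end Steiner

section SteinerDiameter

variable [Fintype V] {G : SimpleGraph V} {k : ℕ}

lemma one_lt_card_of_mem_noncutVerts {v : V} (hv : v ∈ noncutVerts G) : 1 < Fintype.card V := by
  obtain ⟨⟨w, hw⟩⟩ := (hv : (G.induce {v}ᶜ).Connected).nonempty
  exact Fintype.one_lt_card_iff.mpr ⟨w, v, hw⟩

lemma sdiam_le_card_sub_one (hG : G.Connected) (k : ℕ) : sdiam G k ≤ Fintype.card V - 1 :=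
  Finset.sup_le fun S _ => steinerDist_le_card_sub_one hG S

lemma card_sub_one_le_sdiam (hG : G.Connected) (hk : (noncutVerts G).ncard ≤ k)
    (hkV : k ≤ Fintype.card V) : Fintype.card V - 1 ≤ sdiam G k := by
  classical
  obtain ⟨S, hncS, -, hSk⟩ := Finset.exists_subsuperset_card_eq (n := k)
    (noncutVerts G).toFinset.subset_univ (by rwa [← Set.ncard_eq_toFinset_card'])
    (by simpa using hkV)
  calc Fintype.card V - 1 ≤ steinerDist G S :=
        card_sub_one_le_steinerDist hG (by simpa using hncS)
    _ ≤ sdiam G k := Finset.le_sup (f := steinerDist G) (Finset.mem_powersetCard_univ.mpr hSk)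

lemma sdiam_lt_card_sub_one (hk : k < (noncutVerts G).ncard) :
    sdiam G k < Fintype.card V - 1 := by
  classical
  obtain ⟨v, hv⟩ := Set.nonempty_of_ncard_ne_zero (by omega : (noncutVerts G).ncard ≠ 0)
  have hV := one_lt_card_of_mem_noncutVerts hv
  refine (Finset.sup_le fun S hS => ?_).trans_lt (by omega : Fintype.card V - 2 < _)
  obtain ⟨w, hw, hwS⟩ : ∃ w ∈ noncutVerts G, w ∉ S := by
    by_contra! hsub
    have := Set.ncard_le_ncard (s := noncutVerts G) (t := S) hsub
    rw [Set.ncard_coe_finset, Finset.mem_powersetCard_univ.mp hS] at this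
    omega
  exact steinerDist_le_card_sub_two hw hwS

end SteinerDiameter

theorem stmt_3_general [Fintype V] (G : SimpleGraph V) (k : ℕ)
    (hkn : k ≤ Fintype.card V - 1) (hG : G.Connected) :
    sdiam G k = Fintype.card V - 1 ↔ (noncutVerts G).ncard ≤ k := by
  refine ⟨fun h => ?_, fun h => ?_⟩
  · by_contra! hk
    exact (sdiam_lt_card_sub_one hk).ne h
  · exact (sdiam_le_card_sub_one hG k).antisymm (card_sub_one_le_sdiam hG h (by omega))

theorem stmt_3 [Fintype V] (G : SimpleGraph V) (k : ℕ)
    (hk3 : 3 ≤ k) (hkn : k ≤ Fintype.card V - 1) (hG : G.Connected) :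
    sdiam G k = Fintype.card V - 1 ↔ (noncutVerts G).ncard ≤ k :=
  stmt_3_general G k hkn hG
end

section
/- Let G be a connected simple graph on n vertices and let k be an integer with 2 ≤ k ≤ n. If sdiam_k(G) = k-1, then the minimum degree of G satisfies δ(G) ≥ n-k+1 (equivalently, the maximum degree of the complement of G is at most k-2). -/
open SimpleGraph

variable {V : Type*}

lemma connected_card_le_edges {W : Type*} [Fintype W] (G : SimpleGraph W)
    (hG : G.Connected) : Fintype.card W ≤ G.edgeSet.ncard + 1 := by
  classical
  have hne : Nonempty W := hG.nonempty
  obtain ⟨r⟩ := hne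
  have key : ∀ u : W, ∃ x : W, u ≠ r → G.Adj u x ∧ G.dist x r < G.dist u r := by
    intro u
    by_cases hu : u = r
    · exact ⟨u, fun h => absurd hu h⟩
    · obtain ⟨p, hp⟩ := hG.exists_walk_length_eq_dist u r
      cases p with
      | nil => exact absurd rfl hu
      | @cons _ b _ ha q =>
        refine ⟨b, fun _ => ⟨ha, ?_⟩⟩
        have h1 : G.dist b r ≤ q.length := SimpleGraph.dist_le q
        have h2 : q.length + 1 = G.dist u r := by
          simpa [SimpleGraph.Walk.length_cons] using hp
        omega
  choose w hw using key
  have hinj : Set.InjOn (fun u => s(u, w u)) ↑(Finset.univ.erase r) := by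
    intro u1 h1 u2 h2 heq
    simp only [Finset.coe_erase, Set.mem_diff, Set.mem_singleton_iff] at h1 h2
    have h1' := hw u1 h1.2
    have h2' := hw u2 h2.2
    simp only [Sym2.eq, Sym2.rel_iff', Prod.mk.injEq, Prod.swap_prod_mk] at heq
    rcases heq with ⟨rfl, -⟩ | ⟨rfl, hb⟩
    · rfl
    · rw [hb] at h1'
      exact absurd h1'.2 (by omega)
  have hmap : ∀ u ∈ Finset.univ.erase r, s(u, w u) ∈ G.edgeSet.toFinset := by
    intro u hu
    rw [Set.mem_toFinset]
    exact (hw u (Finset.mem_erase.mp hu).1).1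
  have := Finset.card_le_card_of_injOn _ hmap hinj
  rw [Finset.card_erase_of_mem (Finset.mem_univ r), Finset.card_univ] at this
  rw [Set.ncard_eq_toFinset_card']
  have hpos : 0 < Fintype.card W := Fintype.card_pos_iff.mpr ⟨r⟩
  omega

theorem stmt_5 [Fintype V] (G : SimpleGraph V) [DecidableRel G.Adj] (k : ℕ)
    (hk2 : 2 ≤ k) (hkn : k ≤ Fintype.card V) (hG : G.Connected)
    (h : sdiam G k = k - 1) :
    Fintype.card V - k + 1 ≤ G.minDegree := by
  classical
  by_contra hlt
  push_neg at hlt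
  have hneV : Nonempty V := Fintype.card_pos_iff.mp (by omega)
  obtain ⟨v, hv⟩ := G.exists_minimal_degree_vertex
  have hdeg : G.degree v ≤ Fintype.card V - k := by omega
  -- the set of non-neighbors of v (other than v)
  set A : Finset V := Finset.univ \ insert v (G.neighborFinset v) with hA
  have hAcard : k - 1 ≤ A.card := by
    have hvn : v ∉ G.neighborFinset v := by simp
    have : A.card = Fintype.card V - (G.degree v + 1) := by
      rw [hA, Finset.card_sdiff_of_subset (Finset.subset_univ _), Finset.card_univ,
        Finset.card_insert_of_notMem hvn, card_neighborFinset_eq_degree]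
    omega
  obtain ⟨T, hTA, hTcard⟩ := Finset.exists_subset_card_eq hAcard
  have hvA : v ∉ A := by simp [hA]
  have hvT : v ∉ T := fun hvt => hvA (hTA hvt)
  set S : Finset V := insert v T with hS
  have hScard : S.card = k := by
    rw [hS, Finset.card_insert_of_notMem hvT, hTcard]; omega
  have hSmem : S ∈ Finset.powersetCard k (Finset.univ : Finset V) :=
    Finset.mem_powersetCard.mpr ⟨Finset.subset_univ _, hScard⟩
  have hle : steinerDist G S ≤ k - 1 := by
    rw [← h]; exact Finset.le_sup hSmem
  -- the defining set of steinerDist is nonempty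
  have hSne : {m | ∃ H : G.Subgraph, H.Connected ∧ ↑S ⊆ H.verts ∧ H.edgeSet.ncard = m}.Nonempty := by
    refine ⟨(⊤ : G.Subgraph).edgeSet.ncard, ⊤, ?_, by simp [Subgraph.verts_top], rfl⟩
    exact ⟨hG.map (Subgraph.topIso (G := G)).symm.toHom (Subgraph.topIso (G := G)).symm.toEquiv.surjective⟩
  obtain ⟨H, hHconn, hHsub, hHcard⟩ := Nat.sInf_mem hSne
  rw [show sInf _ = steinerDist G S from rfl] at hHcard
  -- v has a neighbor x in H
  have hvH : v ∈ H.verts := hHsub (by simp [hS])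
  obtain ⟨u, huT⟩ : T.Nonempty := Finset.card_pos.mp (by omega)
  have huH : u ∈ H.verts := hHsub (by simp [hS, huT])
  have huv : u ≠ v := fun huv => hvT (huv ▸ huT)
  obtain ⟨p⟩ := hHconn.coe.preconnected ⟨v, hvH⟩ ⟨u, huH⟩
  obtain ⟨x, hadj⟩ : ∃ x : H.verts, H.coe.Adj ⟨v, hvH⟩ x := by
    have hne' : (⟨v, hvH⟩ : H.verts) ≠ ⟨u, huH⟩ := by
      simp only [ne_eq, Subtype.mk.injEq]
      exact fun hvu => huv hvu.symm
    exact ⟨p.getVert 1, p.adj_snd (p.not_nil_of_ne hne')⟩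
  have hHvx : H.Adj v ↑x := hadj
  have hGvx : G.Adj v ↑x := H.adj_sub hHvx
  have hxS : (↑x : V) ∉ S := by
    rw [hS, Finset.mem_insert]
    rintro (hxv | hxT)
    · exact G.irrefl (hxv ▸ hGvx)
    · have := hTA hxT
      simp only [hA, Finset.mem_sdiff, Finset.mem_insert, mem_neighborFinset] at this
      exact this.2 (Or.inr hGvx)
  -- now count
  have hsub2 : ↑(insert (↑x : V) S) ⊆ H.verts := by
    intro y hy
    rw [Finset.coe_insert, Set.mem_insert_iff] at hy
    rcases hy with rfl | hy
    · exact x.2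
    · exact hHsub hy
  have hcard2 : (insert (↑x : V) S).card = k + 1 := by
    rw [Finset.card_insert_of_notMem hxS, hScard]
  have hver : k + 1 ≤ H.verts.ncard := by
    have := Set.ncard_le_ncard hsub2 (Set.toFinite _)
    rwa [Set.ncard_coe_finset, hcard2] at this
  letI : Fintype H.verts := Fintype.ofFinite _
  have hcnt : Fintype.card H.verts ≤ H.coe.edgeSet.ncard + 1 :=
    connected_card_le_edges _ hHconn.coe
  have hv1 : Fintype.card H.verts = H.verts.ncard := by
    rw [← Nat.card_coe_set_eq, Nat.card_eq_fintype_card]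
  have he1 : H.coe.edgeSet.ncard = H.edgeSet.ncard := by
    rw [← H.image_coe_edgeSet_coe]
    exact (Set.ncard_image_of_injective _ (Sym2.map.injective Subtype.val_injective)).symm
  omega
end

section
/- Let G be a connected simple graph on n ≥ 5 vertices. Then sdiam_4(G) = 3 if and only if δ(G) ≥ n-3 and the complement of G contains no 4-cycle as a subgraph. -/
/-!
A connected graph on `m` vertices has at least `m - 1` edges, and a spanning tree attains this.
Hence `d_G(S) ≥ |S| - 1`, with equality exactly when `S` induces a connected subgraph, so
`sdiam_4(G) = 3` says that every four vertices induce a connected subgraph. A disconnected graph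
on four vertices either has an isolated vertex, i.e. a vertex of degree `3` in the complement,
which `δ(G) ≥ n - 3` (equivalently `Δ(Gᶜ) ≤ 2`) excludes, or splits into two pairs with no edge
between them, i.e. its complement contains a `4`-cycle.
-/

open SimpleGraph

variable {V : Type*}

namespace SimpleGraph

variable {G : SimpleGraph V}

lemma Subgraph.ncard_edgeSet_coe_s7 (H : G.Subgraph) : H.coe.edgeSet.ncard = H.edgeSet.ncard := by
  rw [← H.image_coe_edgeSet_coe,
    Set.ncard_image_of_injective _ (Sym2.map.injective Subtype.coe_injective)]

lemma Subgraph.Connected.ncard_verts_le {H : G.Subgraph} (hH : H.Connected) :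
    H.verts.ncard ≤ H.edgeSet.ncard + 1 := by
  have := hH.coe.card_vert_le_card_edgeSet_add_one
  rwa [Nat.card_coe_set_eq, Nat.card_coe_set_eq, H.ncard_edgeSet_coe_s7] at this

lemma Subgraph.Connected.exists_spanningTree [Finite V] {H : G.Subgraph} (hH : H.Connected) :
    ∃ T ≤ H, T.Connected ∧ T.verts = H.verts ∧ T.edgeSet.ncard + 1 = H.verts.ncard := by
  obtain ⟨T, hTH, hT⟩ := hH.coe.exists_isTree_le
  refine ⟨Subgraph.coeSubgraph (toSubgraph T hTH), Subgraph.coeSubgraph_le _,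
    (hT.connected.toSubgraph hTH).coeSubgraph, by simp, ?_⟩
  have hcard := (isTree_iff_connected_and_card.mp hT).2
  rw [Nat.card_coe_set_eq, Nat.card_coe_set_eq] at hcard
  rw [← hcard, Subgraph.edgeSet_map,
    Set.ncard_image_of_injective _ (Sym2.map.injective H.hom_injective)]
  rfl

section Steiner

variable [Fintype V]

lemma steinerDist_le {S : Finset V} {H : G.Subgraph} (hH : H.Connected) (hS : ↑S ⊆ H.verts) :
    steinerDist G S ≤ H.edgeSet.ncard :=
  Nat.sInf_le ⟨H, hH, hS, rfl⟩

lemma Connected.exists_subgraph_ncard_edgeSet_eq_steinerDist (hG : G.Connected) (S : Finset V) :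
    ∃ H : G.Subgraph, H.Connected ∧ ↑S ⊆ H.verts ∧ H.edgeSet.ncard = steinerDist G S := by
  have hne : {m | ∃ H : G.Subgraph, H.Connected ∧ ↑S ⊆ H.verts ∧ H.edgeSet.ncard = m}.Nonempty :=
    ⟨_, toSubgraph G le_rfl, hG.toSubgraph le_rfl, by simp, rfl⟩
  exact Nat.sInf_mem hne

lemma Connected.card_sub_one_le_steinerDist (hG : G.Connected) (S : Finset V) :
    S.card - 1 ≤ steinerDist G S := by
  obtain ⟨H, hH, hSH, hcard⟩ := hG.exists_subgraph_ncard_edgeSet_eq_steinerDist S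
  have hS : S.card ≤ H.verts.ncard := Set.ncard_coe_finset S ▸ Set.ncard_le_ncard hSH
  have := hH.ncard_verts_le
  omega

lemma Connected.steinerDist_le_card_sub_one_iff (hG : G.Connected) {S : Finset V}
    (hS : S.Nonempty) : steinerDist G S ≤ S.card - 1 ↔ (G.induce (S : Set V)).Connected := by
  constructor
  · intro hle
    obtain ⟨H, hH, hSH, hcard⟩ := hG.exists_subgraph_ncard_edgeSet_eq_steinerDist S
    have hverts : (S : Set V) = H.verts := by
      refine Set.eq_of_subset_of_ncard_le hSH ?_
      have := hH.ncard_verts_le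
      have := hS.card_pos
      rw [Set.ncard_coe_finset]
      omega
    exact hverts ▸ hH.induce_verts
  · intro hconn
    obtain ⟨T, -, hT, hTverts, hTcard⟩ := (connected_induce_iff.mp hconn).exists_spanningTree
    have := steinerDist_le hT hTverts.ge
    rw [Subgraph.induce_verts, Set.ncard_coe_finset] at hTcard
    omega

lemma Connected.sdiam_eq_sub_one_iff (hG : G.Connected) {k : ℕ} (hk : 1 ≤ k)
    (hkV : k ≤ Fintype.card V) :
    sdiam G k = k - 1 ↔ ∀ S : Finset V, S.card = k → (G.induce (S : Set V)).Connected := by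
  have hsup_le : sdiam G k ≤ k - 1 ↔ ∀ S : Finset V, S.card = k → steinerDist G S ≤ k - 1 := by
    simp [sdiam, Finset.mem_powersetCard]
  obtain ⟨S₀, -, hS₀⟩ := Finset.exists_subset_card_eq (s := Finset.univ) (n := k) (by simpa)
  have hle_sup : k - 1 ≤ sdiam G k := calc
    k - 1 = S₀.card - 1 := by rw [hS₀]
    _ ≤ steinerDist G S₀ := hG.card_sub_one_le_steinerDist S₀
    _ ≤ sdiam G k := Finset.le_sup (Finset.mem_powersetCard.mpr ⟨Finset.subset_univ _, hS₀⟩)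
  rw [le_antisymm_iff, and_iff_left hle_sup, hsup_le]
  refine forall_congr' fun S => imp_congr_right fun hSk => ?_
  rw [← hSk]
  exact hG.steinerDist_le_card_sub_one_iff (Finset.card_pos.mp (by omega))

end Steiner

lemma not_connected_induce_of_forall_adj_mem {s t : Set V}
    (ht : ∀ x ∈ t, ∀ y ∈ s, G.Adj x y → y ∈ t) {u w : V} (hu : u ∈ s ∩ t) (hw : w ∈ s \ t) :
    ¬(G.induce s).Connected := fun h => by
  obtain ⟨p⟩ := h.preconnected ⟨u, hu.1⟩ ⟨w, hw.1⟩
  obtain ⟨d, -, hd, hd'⟩ := p.exists_boundary_dart {x : s | (x : V) ∈ t} hu.2 hw.2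
  exact hd' (ht _ hd _ d.snd.2 d.adj)

lemma Connected.induce_insert {s : Set V} {v : V} (hs : (G.induce s).Connected)
    (hv : ∃ w ∈ s, G.Adj v w) : (G.induce (insert v s)).Connected := by
  obtain ⟨w, hw, hvw⟩ := hv
  rw [← Set.singleton_union]
  exact connected_induce_union (by simp) hs.preconnected rfl hw hvw

lemma connected_induce_four_of_adj {a b c d : V} (hab : G.Adj a b)
    (hc : G.Adj c a ∨ G.Adj c b ∨ G.Adj c d) (hd : G.Adj d a ∨ G.Adj d b ∨ G.Adj d c)
    (hC4 : ¬(¬G.Adj c a ∧ ¬G.Adj a d ∧ ¬G.Adj d b ∧ ¬G.Adj b c)) :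
    (G.induce {a, b, c, d}).Connected := by
  have hab' : (G.induce {a, b}).Connected := induce_pair_connected_of_adj hab
  by_cases hcab : G.Adj c a ∨ G.Adj c b
  · have habcd := (hab'.induce_insert (v := c) (by simpa using hcab)).induce_insert (v := d)
      (by simpa [or_comm, or_left_comm] using hd)
    have hset : ({d, c, a, b} : Set V) = {a, b, c, d} := by
      ext; simp only [Set.mem_insert_iff, Set.mem_singleton_iff, or_comm, or_left_comm]
    rwa [hset] at habcd
  · have hcd : G.Adj c d := (or_assoc.mpr hc).resolve_left hcab
    have hdab : G.Adj d a ∨ G.Adj d b := by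
      by_contra h
      rw [not_or] at h hcab
      exact hC4 ⟨hcab.1, fun h' => h.1 h'.symm, h.2, fun h' => hcab.2 h'.symm⟩
    have habcd := (hab'.induce_insert (v := d) (by simpa using hdab)).induce_insert (v := c)
      ⟨d, by simp, hcd⟩
    have hset : ({c, d, a, b} : Set V) = {a, b, c, d} := by
      ext; simp only [Set.mem_insert_iff, Set.mem_singleton_iff, or_comm, or_left_comm]
    rwa [hset] at habcd

lemma degree_le_two_iff {v : V} [Fintype (G.neighborSet v)] :
    G.degree v ≤ 2 ↔ ∀ x y z, G.Adj v x → G.Adj v y → G.Adj v z → x = y ∨ x = z ∨ y = z := by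
  rw [← not_lt, ← card_neighborFinset_eq_degree, Finset.two_lt_card]
  simp only [mem_neighborFinset]
  grind

lemma sub_three_le_minDegree_iff [Fintype V] [DecidableEq V] [DecidableRel G.Adj] :
    Fintype.card V - 3 ≤ G.minDegree ↔ ∀ v, Gᶜ.degree v ≤ 2 := by
  cases isEmpty_or_nonempty V
  · simp
  constructor
  · intro h v
    have := G.minDegree_le_degree v
    rw [degree_compl]
    omega
  · intro h
    refine le_minDegree_of_forall_le_degree _ _ fun v => ?_
    have := G.degree_lt_card_verts v
    have := h v
    rw [degree_compl] at this
    omega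

lemma compl_degree_le_two_of_forall_connected_induce_four
    (h : ∀ S : Finset V, S.card = 4 → (G.induce (S : Set V)).Connected) (v : V)
    [Fintype (Gᶜ.neighborSet v)] : Gᶜ.degree v ≤ 2 := by
  classical
  refine degree_le_two_iff.mpr fun x y z hx hy hz => ?_
  by_contra! hxyz
  rw [compl_adj] at hx hy hz
  have hS := h {v, x, y, z} (Finset.card_eq_four.mpr
    ⟨v, x, y, z, hx.1, hy.1, hz.1, hxyz.1, hxyz.2.1, hxyz.2.2, rfl⟩)
  rw [Finset.coe_insert, Finset.coe_insert, Finset.coe_pair] at hS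
  refine not_connected_induce_of_forall_adj_mem (t := {v}) ?_ (u := v) (w := x)
    (by simp) (by simp [hx.1.symm]) hS
  rintro _ rfl y hy hvy
  simp only [Set.mem_insert_iff, Set.mem_singleton_iff] at hy
  rcases hy with rfl | rfl | rfl | rfl
  exacts [(G.irrefl hvy).elim, (hx.2 hvy).elim, (hy.2 hvy).elim, (hz.2 hvy).elim]

lemma forall_connected_induce_four_of_compl_degree_le_two [DecidableEq V] [Fintype V]
    [DecidableRel G.Adj] (hdeg : ∀ v, Gᶜ.degree v ≤ 2)
    (hC4 : ¬ ∃ u₁ u₂ u₃ u₄ : V, u₁ ≠ u₂ ∧ u₁ ≠ u₃ ∧ u₁ ≠ u₄ ∧ u₂ ≠ u₃ ∧ u₂ ≠ u₄ ∧ u₃ ≠ u₄ ∧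
      ¬ G.Adj u₁ u₂ ∧ ¬ G.Adj u₂ u₃ ∧ ¬ G.Adj u₃ u₄ ∧ ¬ G.Adj u₄ u₁)
    (S : Finset V) (hS : S.card = 4) : (G.induce (S : Set V)).Connected := by
  have hnbr : ∀ v x y z, v ≠ x → v ≠ y → v ≠ z → x ≠ y → x ≠ z → y ≠ z →
      G.Adj v x ∨ G.Adj v y ∨ G.Adj v z := by
    intro v x y z hvx hvy hvz hxy hxz hyz
    by_contra! h
    have := degree_le_two_iff.mp (hdeg v) x y z ((G.compl_adj _ _).mpr ⟨hvx, h.1⟩)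
      ((G.compl_adj _ _).mpr ⟨hvy, h.2.1⟩) ((G.compl_adj _ _).mpr ⟨hvz, h.2.2⟩)
    tauto
  obtain ⟨a, b, c, d, hab, hac, had, hbc, hbd, hcd, rfl⟩ := Finset.card_eq_four.mp hS
  rw [Finset.coe_insert, Finset.coe_insert, Finset.coe_pair]
  -- whichever neighbour of `a` exists plays the role of `b` in `connected_induce_four_of_adj`
  rcases hnbr a b c d hab hac had hbc hbd hcd with h | h | h
  · exact connected_induce_four_of_adj h (hnbr c a b d hac.symm hbc.symm hcd hab had hbd)
      (hnbr d a b c had.symm hbd.symm hcd.symm hab hac hbc)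
      (fun h' => hC4 ⟨c, a, d, b, hac.symm, hcd, hbc.symm, had, hab, hbd.symm, h'⟩)
  · have := connected_induce_four_of_adj h (hnbr b a c d hab.symm hbc hbd hac had hcd)
      (hnbr d a c b had.symm hcd.symm hbd.symm hac hab hbc.symm)
      (fun h' => hC4 ⟨b, a, d, c, hab.symm, hbd, hbc, had, hac, hcd.symm, h'⟩)
    rwa [Set.insert_comm c] at this
  · have := connected_induce_four_of_adj h (hnbr b a d c hab.symm hbd hbc had hac hcd.symm)
      (hnbr c a d b hac.symm hcd hbc.symm had hab hbd.symm)
      (fun h' => hC4 ⟨b, a, c, d, hab.symm, hbc, hbd, hac, had, hcd, h'⟩)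
    rwa [Set.insert_comm d, Set.pair_comm d] at this

lemma forall_connected_induce_four_iff [Fintype V] [DecidableRel G.Adj] :
    (∀ S : Finset V, S.card = 4 → (G.induce (S : Set V)).Connected) ↔
      (Fintype.card V - 3 ≤ G.minDegree ∧
        ¬ ∃ u₁ u₂ u₃ u₄ : V, u₁ ≠ u₂ ∧ u₁ ≠ u₃ ∧ u₁ ≠ u₄ ∧ u₂ ≠ u₃ ∧ u₂ ≠ u₄ ∧ u₃ ≠ u₄ ∧
          ¬ G.Adj u₁ u₂ ∧ ¬ G.Adj u₂ u₃ ∧ ¬ G.Adj u₃ u₄ ∧ ¬ G.Adj u₄ u₁) := by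
  classical
  rw [sub_three_le_minDegree_iff]
  refine ⟨fun h => ⟨fun v => compl_degree_le_two_of_forall_connected_induce_four h v, ?_⟩,
    fun ⟨hdeg, hC4⟩ => forall_connected_induce_four_of_compl_degree_le_two hdeg hC4⟩
  rintro ⟨a, b, c, d, hab, hac, had, hbc, hbd, hcd, h₁, h₂, h₃, h₄⟩
  have hS := h {a, b, c, d} (Finset.card_eq_four.mpr
    ⟨a, b, c, d, hab, hac, had, hbc, hbd, hcd, rfl⟩)
  rw [Finset.coe_insert, Finset.coe_insert, Finset.coe_pair] at hS
  refine not_connected_induce_of_forall_adj_mem (t := {a, c}) ?_ (u := a) (w := b)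
    (by simp) (by simp [hab.symm, hbc]) hS
  intro x hx y hy hxy
  simp only [Set.mem_insert_iff, Set.mem_singleton_iff] at hx hy ⊢
  rcases hx with rfl | rfl <;> rcases hy with rfl | rfl | rfl | rfl <;>
    simp_all [G.adj_comm]

end SimpleGraph

theorem stmt_7 [Fintype V] (G : SimpleGraph V) [DecidableRel G.Adj]
    (hn : 5 ≤ Fintype.card V) (hG : G.Connected) :
    sdiam G 4 = 3 ↔
      (Fintype.card V - 3 ≤ G.minDegree ∧
        ¬ ∃ u₁ u₂ u₃ u₄ : V, u₁ ≠ u₂ ∧ u₁ ≠ u₃ ∧ u₁ ≠ u₄ ∧ u₂ ≠ u₃ ∧ u₂ ≠ u₄ ∧ u₃ ≠ u₄ ∧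
          ¬ G.Adj u₁ u₂ ∧ ¬ G.Adj u₂ u₃ ∧ ¬ G.Adj u₃ u₄ ∧ ¬ G.Adj u₄ u₁) :=
  (hG.sdiam_eq_sub_one_iff (k := 4) (by norm_num) (by omega)).trans
    forall_connected_induce_four_iff
end

section
/- Let G be a connected simple graph on n ≥ 3 vertices containing a cycle of length c. Then G has at least c non-cut vertices. -/
open SimpleGraph

variable {V : Type*}

/-!
Map each vertex `v` of the cycle to a non-cut vertex of `G`, injectively. A non-cut vertex `v`
goes to itself. If `v` is a cut vertex, some component of `G - v` misses the rest of the cycle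
(which stays connected in `G - v`); a vertex `w` of that component farthest from `v` is a
non-cut vertex of `G`, since a shortest path from `v` to any other vertex cannot pass through
`w`. Such a `w` lies off the cycle, and two distinct cut vertices `v`, `v'` of the cycle cannot
share it: a path from `w` to `v` either avoids `v'` or passes through `v'` before reaching `v`,
so `w` reaches the cycle in `G - v'` or in `G - v`.
-/

namespace SimpleGraph

variable {G : SimpleGraph V} {u v w x y z t : V}

def ReachableAvoiding (G : SimpleGraph V) (v x y : V) : Prop :=
  ∃ p : G.Walk x y, v ∉ p.support

namespace ReachableAvoiding

lemma refl (hx : x ≠ v) : G.ReachableAvoiding v x x :=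
  ⟨.nil, by simpa using hx.symm⟩

lemma symm (h : G.ReachableAvoiding v x y) : G.ReachableAvoiding v y x :=
  let ⟨p, hp⟩ := h
  ⟨p.reverse, by simpa using hp⟩

lemma trans (h : G.ReachableAvoiding v x y) (h' : G.ReachableAvoiding v y z) :
    G.ReachableAvoiding v x z := by
  obtain ⟨p, hp⟩ := h
  obtain ⟨q, hq⟩ := h'
  exact ⟨p.append q, by simp [Walk.mem_support_append_iff, hp, hq]⟩

lemma ne_right (h : G.ReachableAvoiding v x y) : y ≠ v := by
  obtain ⟨p, hp⟩ := h
  rintro rfl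
  exact hp p.end_mem_support

end ReachableAvoiding

lemma reachableAvoiding_of_mem_noncutVerts (hv : v ∈ noncutVerts G) (hx : x ≠ v) (hy : y ≠ v) :
    G.ReachableAvoiding v x y := by
  obtain ⟨p⟩ := hv.preconnected ⟨x, hx⟩ ⟨y, hy⟩
  refine ⟨p.map (Embedding.induce _).toHom, fun hvp => ?_⟩
  obtain ⟨z, -, hz⟩ := List.mem_map.1 (Walk.support_map _ _ ▸ hvp)
  exact z.2 hz

lemma mem_noncutVerts_of_forall_reachableAvoiding (hx : x ≠ v)
    (h : ∀ y, y ≠ v → G.ReachableAvoiding v x y) : v ∈ noncutVerts G := by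
  refine (connected_iff_exists_forall_reachable _).2 ⟨⟨x, hx⟩, fun ⟨y, hy⟩ => ?_⟩
  obtain ⟨p, hp⟩ := h y hy
  exact ⟨p.induce {v}ᶜ fun z hz (hzv : z = v) => hp (hzv ▸ hz)⟩

lemma mem_noncutVerts_of_forall_dist_le (hG : G.Connected) (hw : G.ReachableAvoiding v u w)
    (hmax : ∀ x, G.ReachableAvoiding v u x → G.dist v x ≤ G.dist v w) :
    w ∈ noncutVerts G := by
  classical
  refine mem_noncutVerts_of_forall_reachableAvoiding hw.ne_right.symm fun x hxw => ?_
  obtain ⟨p, hp, hlen⟩ := hG.exists_path_of_dist x v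
  by_cases hwp : w ∈ p.support
  · -- then `x` lies in the component of `w` in `G - v` but is farther from `v` than `w`
    exfalso
    have hwx : G.ReachableAvoiding v w x :=
      ⟨(p.takeUntil w hwp).reverse,
        by simpa using p.endpoint_notMem_support_takeUntil hp hwp hw.ne_right.symm⟩
    have htake : (p.takeUntil w hwp).length ≠ 0 := fun h => hxw (Walk.eq_of_length_eq_zero h)
    have hdrop : G.dist w v ≤ (p.dropUntil w hwp).length := G.dist_le _
    have hsplit := congrArg Walk.length (p.take_spec hwp)
    rw [Walk.length_append] at hsplit
    have hle := hmax x (hw.trans hwx)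
    rw [G.dist_comm] at hlen hdrop
    omega
  · exact ⟨p.reverse, by simpa using hwp⟩

lemma exists_mem_noncutVerts_not_reachableAvoiding [Finite V] (hG : G.Connected)
    (hv : v ∉ noncutVerts G) (ht : t ≠ v) :
    ∃ w ∈ noncutVerts G, ¬ G.ReachableAvoiding v w t := by
  obtain ⟨u, huv, hu⟩ : ∃ u, u ≠ v ∧ ¬ G.ReachableAvoiding v t u := by
    by_contra! h
    exact hv (mem_noncutVerts_of_forall_reachableAvoiding ht h)
  obtain ⟨w, hw, hmax⟩ := Set.exists_max_image {x | G.ReachableAvoiding v u x} (G.dist v)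
    (Set.toFinite _) ⟨u, .refl huv⟩
  exact ⟨w, mem_noncutVerts_of_forall_dist_le hG hw hmax, fun hwt => hu (hw.trans hwt).symm⟩

lemma Reachable.reachableAvoiding_or (h : G.Reachable w x) (hxy : x ≠ y) :
    G.ReachableAvoiding y w x ∨ G.ReachableAvoiding x w y := by
  classical
  obtain ⟨p, hp⟩ := h.exists_isPath
  by_cases hy : y ∈ p.support
  · exact .inr ⟨p.takeUntil y hy, p.endpoint_notMem_support_takeUntil hp hy hxy⟩
  · exact .inl ⟨p, hy⟩

theorem ncard_le_ncard_noncutVerts [Finite V] (hG : G.Connected) {S : Set V} (hS : S.Nontrivial)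
    (hsep : ∀ v ∈ S, ∀ x ∈ S, ∀ y ∈ S, x ≠ v → y ≠ v → G.ReachableAvoiding v x y) :
    S.ncard ≤ (noncutVerts G).ncard := by
  set N := noncutVerts G
  have hbranch : ∀ v ∈ S \ N, ∃ w ∈ N, ∀ z ∈ S, z ≠ v → ¬ G.ReachableAvoiding v w z := by
    rintro v ⟨hvS, hvN⟩
    obtain ⟨t, htS, htv⟩ := hS.exists_ne v
    obtain ⟨w, hwN, hwt⟩ := exists_mem_noncutVerts_not_reachableAvoiding hG hvN htv
    exact ⟨w, hwN, fun z hzS hzv hwz => hwt (hwz.trans (hsep v hvS z hzS t htS hzv htv))⟩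
  choose! f hfN hf using hbranch
  have hfS : ∀ v ∈ S \ N, f v ∉ S := fun v hv hfv =>
    have hfv_ne : f v ≠ v := fun h => hv.2 (h ▸ hfN v hv)
    hf v hv (f v) hfv hfv_ne (.refl hfv_ne)
  have hinj : Set.InjOn f (S \ N) := by
    intro v hv v' hv' hff
    by_contra hne
    rcases (hG.preconnected (f v) v).reachableAvoiding_or hne with h | h
    · exact hf v' hv' v hv.1 hne (hff ▸ h)
    · exact hf v hv v' hv'.1 (Ne.symm hne) h
  have hcut : (S \ N).ncard ≤ (N \ S).ncard :=
    Set.ncard_le_ncard_of_injOn f (fun v hv => ⟨hfN v hv, hfS v hv⟩) hinj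
  calc S.ncard = (S ∩ N).ncard + (S \ N).ncard := (Set.ncard_inter_add_ncard_sdiff_eq_ncard S N).symm
    _ ≤ (N ∩ S).ncard + (N \ S).ncard := by rw [Set.inter_comm]; omega
    _ = N.ncard := Set.ncard_inter_add_ncard_sdiff_eq_ncard N S

namespace Walk.IsCycle

variable {W : G.Walk u u}

lemma reachableAvoiding (hW : W.IsCycle) (hv : v ∈ W.support) (hx : x ∈ W.support)
    (hy : y ∈ W.support) (hxv : x ≠ v) (hyv : y ≠ v) : G.ReachableAvoiding v x y := by
  classical
  -- the cycle rotated to start at `v`, minus its first edge, is a path through all of it to `v`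
  set p := (W.rotate v hv).tail
  have hp : p.IsPath := (hW.rotate hv).isPath_tail
  have reach : ∀ z ∈ W.support, z ≠ v → G.ReachableAvoiding v (W.rotate v hv).snd z := by
    intro z hz hzv
    rw [← W.mem_support_rotate_iff v hv, ← Walk.cons_support_tail (hW.rotate hv).not_nil] at hz
    have hzp : z ∈ p.support := (List.mem_cons.1 hz).resolve_left hzv
    exact ⟨p.takeUntil z hzp, p.endpoint_notMem_support_takeUntil hp hzp hzv.symm⟩
  exact (reach x hx hxv).symm.trans (reach y hy hyv)

lemma ncard_support (hW : W.IsCycle) : {v | v ∈ W.support}.ncard = W.length := by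
  classical
  have hsupp : {v | v ∈ W.support} = ↑W.support.tail.toFinset := by
    ext v
    rw [Set.mem_ofPred_eq, Finset.mem_coe, List.mem_toFinset, ← W.cons_tail_support,
      List.tail_cons, List.mem_cons]
    exact ⟨fun h => h.elim (· ▸ W.end_mem_tail_support hW.not_nil) id, .inr⟩
  rw [hsupp, Set.ncard_coe_finset, List.toFinset_card_of_nodup hW.support_nodup,
    List.length_tail, Walk.length_support, Nat.add_sub_cancel]

end Walk.IsCycle

end SimpleGraph

theorem stmt_12_general [Fintype V] (G : SimpleGraph V)
    (hG : G.Connected)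
    (c : ℕ) (u : V) (W : G.Walk u u) (hW : W.IsCycle) (hlen : W.length = c) :
    c ≤ (noncutVerts G).ncard := by
  have hS : {v | v ∈ W.support}.Nontrivial := by
    rw [← Set.one_lt_ncard_iff_nontrivial, hW.ncard_support]
    linarith [hW.three_le_length]
  calc c = {v | v ∈ W.support}.ncard := by rw [hW.ncard_support, hlen]
    _ ≤ (noncutVerts G).ncard :=
      ncard_le_ncard_noncutVerts hG hS fun _ hv _ hx _ hy => hW.reachableAvoiding hv hx hy

theorem stmt_12 [Fintype V] (G : SimpleGraph V)
    (hn : 3 ≤ Fintype.card V) (hG : G.Connected)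
    (c : ℕ) (u : V) (W : G.Walk u u) (hW : W.IsCycle) (hlen : W.length = c) :
    c ≤ (noncutVerts G).ncard :=
  stmt_12_general G hG c u W hW hlen
end

section
/- Let G be a connected graph of order n and S ⊆ V(G) a set of k vertices such that every vertex of V(G) \ S is a cut vertex of G. Then d_G(S) = n - 1, i.e., every S-Steiner tree is a spanning tree of G. -/
open SimpleGraph

variable {V : Type*}

/-!
Let `H` be a connected subgraph containing `S` and `w ∈ H`. If `H` missed a vertex, take a
missed vertex `u` farthest from `w`. Every other vertex `a` is joined to `w` avoiding `u`: inside
`H` if `a ∈ H`, and otherwise along a shortest path, since `dist w a ≤ dist w u` forbids passing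
through `u`. So `u ∉ S` is not a cut vertex, contradicting the hypothesis. Hence `H` spans `G`
and has at least `n - 1` edges, with equality for a spanning tree.
-/

namespace SimpleGraph

variable {W : Type*} {G : SimpleGraph W}

lemma induce_connected_of_forall_exists_walk {s : Set W} {w : W} (hw : w ∈ s)
    (h : ∀ a ∈ s, ∃ p : G.Walk w a, ∀ x ∈ p.support, x ∈ s) : (G.induce s).Connected := by
  rw [connected_iff_exists_forall_reachable]
  refine ⟨⟨w, hw⟩, fun ⟨a, ha⟩ => ?_⟩
  obtain ⟨p, hp⟩ := h a ha
  exact ⟨p.induce s hp⟩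

lemma Walk.dist_lt_of_mem_support_of_length_eq_dist {w a u : W} (p : G.Walk w a)
    (hp : p.length = G.dist w a) (hu : u ∈ p.support) (hua : u ≠ a) :
    G.dist w u < G.dist w a := by
  classical
  have hsplit : (p.takeUntil u hu).length + (p.dropUntil u hu).length = p.length := by
    rw [← Walk.length_append, Walk.take_spec]
  have hwu : G.dist w u ≤ (p.takeUntil u hu).length := dist_le _
  have hpos : 0 < G.dist u a := (p.dropUntil u hu).reachable.pos_dist_of_ne hua
  have hdrop : G.dist u a ≤ (p.dropUntil u hu).length := dist_le _
  omega

lemma Connected.exists_notMem_verts_induce_compl_singleton_connected [Finite W]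
    (hG : G.Connected) {H : G.Subgraph} (hH : H.Connected) (hne : H.vertsᶜ.Nonempty) :
    ∃ u ∉ H.verts, (G.induce ({u}ᶜ : Set W)).Connected := by
  obtain ⟨w, hw⟩ := hH.nonempty
  obtain ⟨u, hu, hmax⟩ := Set.exists_max_image _ (G.dist w) (Set.toFinite _) hne
  refine ⟨u, hu, induce_connected_of_forall_exists_walk (w := w) (fun h => hu (h ▸ hw)) ?_⟩
  intro a hau
  by_cases ha : a ∈ H.verts
  · obtain ⟨p, hp⟩ := (Subgraph.preconnected_iff_forall_exists_walk_subgraph H).mp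
      hH.preconnected hw ha
    refine ⟨p, fun x hx hxu => hu ?_⟩
    rw [← hxu]
    exact hp.1 ((p.mem_verts_toSubgraph).mpr hx)
  · obtain ⟨p, hp⟩ := (hG.preconnected w a).exists_walk_length_eq_dist
    refine ⟨p, fun x hx hxu => ?_⟩
    rw [Set.mem_singleton_iff] at hxu
    subst hxu
    exact (p.dist_lt_of_mem_support_of_length_eq_dist hp hx (Ne.symm hau)).not_ge (hmax a ha)

lemma Subgraph.Connected.card_verts_le_ncard_edgeSet_add_one {H : G.Subgraph}
    (hH : H.Connected) : Nat.card H.verts ≤ H.edgeSet.ncard + 1 := by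
  have hedge : H.edgeSet.ncard = Nat.card H.coe.edgeSet := by
    rw [← H.image_coe_edgeSet_coe, Set.ncard_image_of_injective _
      (Sym2.map.injective Subtype.val_injective), Nat.card_coe_set_eq]
  rw [hedge]
  exact hH.coe.card_vert_le_card_edgeSet_add_one

lemma Connected.steinerDist_le [Fintype W] (hG : G.Connected) (S : Finset W) :
    steinerDist G S ≤ Fintype.card W - 1 := by
  obtain ⟨T, hle, hT⟩ := hG.exists_isTree_le
  have hcard := (isTree_iff_connected_and_card.mp hT).2
  rw [Nat.card_eq_fintype_card (α := W)] at hcard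
  refine Nat.sInf_le ⟨toSubgraph T hle, hT.connected.toSubgraph hle, fun _ _ => trivial, ?_⟩
  rw [← Nat.card_coe_set_eq]
  change Nat.card T.edgeSet = _
  omega

lemma Connected.card_sub_one_le_steinerDist_s17 [Fintype W] (hG : G.Connected) {S : Finset W}
    (hcut : ∀ v ∉ S, ¬ (G.induce ({v}ᶜ : Set W)).Connected) :
    Fintype.card W - 1 ≤ steinerDist G S := by
  refine le_csInf ⟨_, ⟨toSubgraph G le_rfl, hG.toSubgraph le_rfl, fun _ _ => trivial, rfl⟩⟩ ?_
  rintro m ⟨H, hH, hSH, rfl⟩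
  have hspan : H.verts = Set.univ := by
    by_contra hne
    obtain ⟨u, hu, hconn⟩ := hG.exists_notMem_verts_induce_compl_singleton_connected hH
      (Set.nonempty_compl.mpr hne)
    exact hcut u (fun huS => hu (hSH huS)) hconn
  have := hH.card_verts_le_ncard_edgeSet_add_one
  rw [hspan, Nat.card_univ, Nat.card_eq_fintype_card] at this
  omega

end SimpleGraph

theorem stmt_17_general [Fintype V] (G : SimpleGraph V) (hG : G.Connected)
    (S : Finset V)
    (hcut : ∀ v : V, v ∉ S → ¬ (G.induce ({v}ᶜ : Set V)).Connected) :
    steinerDist G S = Fintype.card V - 1 :=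
  le_antisymm (hG.steinerDist_le S) (hG.card_sub_one_le_steinerDist_s17 hcut)

theorem stmt_17 [Fintype V] (G : SimpleGraph V) (hG : G.Connected)
    (k : ℕ) (S : Finset V) (hS : S.card = k)
    (hcut : ∀ v : V, v ∉ S → ¬ (G.induce ({v}ᶜ : Set V)).Connected) :
    steinerDist G S = Fintype.card V - 1 :=
  stmt_17_general G hG S hcut
end
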